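/- Let G be the graph on vertices {v_1,…,v_5} with edges {v_4,v_1},{v_4,v_2},{v_4,v_3},{v_5,v_1},{v_5,v_2}, and let k ≥ 2 with distinct classes a, b. Then for every connected k-subpartition {V_i} of G with incidence vector x: Σ_{i=1}^{3}(x_{v_i,a} + x_{v_i,b}) − Σ_{i=4}^{5}(x_{v_i,a} + x_{v_i,b}) ≤ 2. -/

import Mathlib

open scoped Classical

/-- A connected `k`-subpartition of `G`. -/
def ConnKSub {V : Type*} (G : SimpleGraph V) (k : ℕ) (P : Fin k → Set V) : Prop :=
  (∀ i j, i ≠ j → Disjoint (P i) (P j)) ∧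
    ∀ i, P i = ∅ ∨ (G.induce (P i)).Connected

/-- The graph on `v₁,…,v₅` (as `0,…,4`) with edges
`{v₄,v₁},{v₄,v₂},{v₄,v₃},{v₅,v₁},{v₅,v₂}`. -/
def G17 : SimpleGraph (Fin 5) :=
  SimpleGraph.fromEdgeSet {s(3, 0), s(3, 1), s(3, 2), s(4, 0), s(4, 1)}

/-!
If two disjoint parts together meet the cut `Z`, the `Z`-term subtracts at least one while
the `S`-term is at most `|S|`. Otherwise both parts are connected in `G - Z`, so each contains
at most one vertex of `S`, and the left-hand side is at most `2`.
-/

open Finset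

variable {V : Type*} {G : SimpleGraph V}

def IsMultiwayCut (G : SimpleGraph V) (S Z : Set V) : Prop :=
  ∀ u ∈ S, ∀ v ∈ S, ∀ (hu : u ∈ Zᶜ) (hv : v ∈ Zᶜ),
    (G.induce Zᶜ).Reachable ⟨u, hu⟩ ⟨v, hv⟩ → u = v

lemma isMultiwayCut_of_adj_mem {S Z : Set V} (h : ∀ s ∈ S, ∀ w, G.Adj s w → w ∈ Z) :
    IsMultiwayCut G S Z := by
  rintro u hu v - huZ hvZ ⟨p⟩
  cases p with
  | nil => rfl
  | cons hadj _ => exact absurd (h u hu _ hadj) (Subtype.coe_prop _ : _ ∈ Zᶜ)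

lemma IsMultiwayCut.subsingleton_inter {S Z U : Set V} (hcut : IsMultiwayCut G S Z)
    (hU : (G.induce U).Connected) (hUZ : Disjoint U Z) : (U ∩ S).Subsingleton := by
  rintro u ⟨huU, huS⟩ v ⟨hvU, hvS⟩
  have hsub : U ⊆ Zᶜ := hUZ.subset_compl_right
  exact hcut u huS v hvS (hsub huU) (hsub hvU)
    ((hU ⟨u, huU⟩ ⟨v, hvU⟩).map (SimpleGraph.induceHomOfLE G hsub).toHom)

lemma sum_ite_mem_le_one {S : Finset V} {U : Set V} (h : (U ∩ ↑S).Subsingleton) :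
    ∑ v ∈ S, (if v ∈ U then (1 : ℤ) else 0) ≤ 1 := by
  rw [sum_boole]
  exact_mod_cast card_le_one.mpr fun u hu v hv ↦ by
    simp only [mem_filter] at hu hv
    exact h ⟨hu.2, hu.1⟩ ⟨hv.2, hv.1⟩

theorem IsMultiwayCut.sum_sub_sum_le {S Z : Finset V} (hcut : IsMultiwayCut G S Z)
    {A B : Set V} (hA : A = ∅ ∨ (G.induce A).Connected) (hB : B = ∅ ∨ (G.induce B).Connected)
    (hAB : Disjoint A B) :
    (∑ v ∈ S, ((if v ∈ A then (1 : ℤ) else 0) + (if v ∈ B then 1 else 0))) -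
      (∑ z ∈ Z, ((if z ∈ A then (1 : ℤ) else 0) + (if z ∈ B then 1 else 0))) ≤
      max ((#S : ℤ) - 1) 2 := by
  have hZ_nonneg : ∀ z ∈ Z, 0 ≤ (if z ∈ A then (1 : ℤ) else 0) + (if z ∈ B then 1 else 0) :=
    fun z _ ↦ by split_ifs <;> norm_num
  by_cases hmeet : ∃ z ∈ Z, z ∈ A ∨ z ∈ B
  · obtain ⟨z, hz, hzAB⟩ := hmeet
    have hS : ∑ v ∈ S, ((if v ∈ A then (1 : ℤ) else 0) + (if v ∈ B then 1 else 0)) ≤ #S := by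
      have hterm : ∀ v ∈ S, (if v ∈ A then (1 : ℤ) else 0) + (if v ∈ B then 1 else 0) ≤ 1 :=
        fun v _ ↦ by
          have := @Set.disjoint_left.mp hAB v
          split_ifs <;> simp_all
      simpa using sum_le_card_nsmul S _ 1 hterm
    have hZ : 1 ≤ ∑ z ∈ Z, ((if z ∈ A then (1 : ℤ) else 0) + (if z ∈ B then 1 else 0)) :=
      le_trans (by split_ifs <;> simp_all) (single_le_sum hZ_nonneg hz)
    exact le_max_of_le_left (by linarith)
  · push Not at hmeet
    have hZ : ∑ z ∈ Z, ((if z ∈ A then (1 : ℤ) else 0) + (if z ∈ B then 1 else 0)) = 0 :=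
      sum_eq_zero fun z hz ↦ by simp [hmeet z hz]
    have hpart : ∀ U : Set V, (U = ∅ ∨ (G.induce U).Connected) → (∀ z ∈ Z, z ∉ U) →
        ∑ v ∈ S, (if v ∈ U then (1 : ℤ) else 0) ≤ 1 := by
      rintro U (rfl | hU) hUZ
      · simp
      · exact sum_ite_mem_le_one <| hcut.subsingleton_inter hU <|
          Set.disjoint_left.mpr fun z hzU hz ↦ hUZ z hz hzU
    rw [hZ, sum_add_distrib]
    exact le_max_of_le_right <| by
      linarith [hpart A hA fun z hz ↦ (hmeet z hz).1, hpart B hB fun z hz ↦ (hmeet z hz).2]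

lemma G17_isMultiwayCut :
    IsMultiwayCut G17 ({0, 1, 2} : Finset (Fin 5)) ({3, 4} : Finset (Fin 5)) :=
  isMultiwayCut_of_adj_mem fun s hs w hadj ↦ by
    simp only [coe_insert, coe_singleton, Set.mem_insert_iff, Set.mem_singleton_iff] at hs ⊢
    simp only [G17, SimpleGraph.fromEdgeSet_adj, Set.mem_insert_iff,
      Set.mem_singleton_iff] at hadj
    fin_cases s <;> fin_cases w <;> simp_all

theorem stmt17_general (k : ℕ) (a b : Fin k) (hab : a ≠ b)
    (P : Fin k → Set (Fin 5)) (hP : ConnKSub G17 k P) :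
    (∑ i ∈ ({0, 1, 2} : Finset (Fin 5)),
        ((if i ∈ P a then (1 : ℤ) else 0) + (if i ∈ P b then 1 else 0))) -
      (∑ i ∈ ({3, 4} : Finset (Fin 5)),
        ((if i ∈ P a then (1 : ℤ) else 0) + (if i ∈ P b then 1 else 0))) ≤ 2 := by
  simpa using G17_isMultiwayCut.sum_sub_sum_le (hP.2 a) (hP.2 b) (hP.1 a b hab)

theorem stmt17 (k : ℕ) (hk : 2 ≤ k) (a b : Fin k) (hab : a ≠ b)
    (P : Fin k → Set (Fin 5)) (hP : ConnKSub G17 k P) :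
    (∑ i ∈ ({0, 1, 2} : Finset (Fin 5)),
        ((if i ∈ P a then (1 : ℤ) else 0) + (if i ∈ P b then 1 else 0))) -
      (∑ i ∈ ({3, 4} : Finset (Fin 5)),
        ((if i ∈ P a then (1 : ℤ) else 0) + (if i ∈ P b then 1 else 0))) ≤ 2 :=
  stmt17_general k a b hab P hP
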